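/- Let F = F(A) be the free group on A = {a_1,…,a_k} with k ≥ 2, let m ≥ 1, let K ≥ 1 be an integer and let 0 < λ < 1. The set of m-tuples (u_1,…,u_m) ∈ C_{m,A} such that every subword of any u_i of length ≥ λ|u_i| contains every freely reduced word of length ≤ K in F(A) as a subword, is exponentially generic in C_{m,A}. -/

import Mathlib

/-!
A reduced word of length `n` over `A^{±1}` is coded by its first letter and `n - 1` digits in
`{0, …, 2k - 2}`, each choosing one of the `2k - 1` letters allowed after the previous one; at
least half of these codes give cyclically reduced words. If a window of length `⌈λn⌉` misses a
reduced word `W` of length `K`, then each of the `⌊(⌈λn⌉ - 1)/(K + 1)⌋` consecutive blocks of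
`K + 1` digits inside it avoids the one block that spells a connecting letter followed by `W`.
Summing over `W` and the position of the window, the bad words are at most a fraction
`O(n (1 - (2k - 1)^{-(K+1)})^{λn/(K+1)})` of the cyclically reduced ones. For `m`-tuples the good
proportion is an `m`-th power `x^m`, and `1 - x^m ≤ m (1 - x)`.
-/

/-- The length of the freely reduced word representing `g`. -/
def wlen {α : Type} [DecidableEq α] (g : FreeGroup α) : ℕ := g.toWord.length

/-- `g` is cyclically reduced: in its reduced word the first letter is not
the inverse of the last letter. -/
def CyclicallyReduced {α : Type} [DecidableEq α] (g : FreeGroup α) : Prop :=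
  ∀ x y : α × Bool, g.toWord.head? = some x → g.toWord.getLast? = some y →
    x ≠ (y.1, !y.2)

/-- `C_{m,A}`: the set of `m`-tuples of cyclically reduced words in the free
group of rank `k`, all entries of equal length. -/
def Cset (k m : ℕ) : Set (Fin m → FreeGroup (Fin k)) :=
  {T | (∀ i, CyclicallyReduced (T i)) ∧ ∀ i j, wlen (T i) = wlen (T j)}

/-- `γ_A(n,U)`: the number of tuples in `U` all of whose entries have length `n`. -/
noncomputable def gammaA {k m : ℕ} (U : Set (Fin m → FreeGroup (Fin k))) (n : ℕ) : ℕ :=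
  Set.ncard {T | T ∈ U ∧ ∀ i, wlen (T i) = n}

/-- `U` is an exponentially generic subset of `C_{m,A}`:
`γ(n,U)/γ(n,C_{m,A}) → 1` exponentially fast. -/
def ExpGenericIn {k m : ℕ} (U : Set (Fin m → FreeGroup (Fin k))) : Prop :=
  U ⊆ Cset k m ∧ ∃ C : ℝ, 0 < C ∧ ∃ q : ℝ, 0 < q ∧ q < 1 ∧
    ∀ n : ℕ, |((gammaA U n : ℝ) / (gammaA (Cset k m) n : ℝ)) - 1| ≤ C * q ^ n

/-- `u` is a (contiguous) subword of `w`. -/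
def Subword {α : Type} (u w : List (α × Bool)) : Prop :=
  ∃ s t : List (α × Bool), w = s ++ u ++ t

open Filter List

lemma Nat.card_prod_subtype {X Y : Type*} [Fintype X] [Finite Y] (p : X → Y → Prop) :
    Nat.card {z : X × Y // p z.1 z.2} = ∑ x, Nat.card {y // p x y} := by
  rw [Nat.card_congr (Equiv.subtypeProdEquivSigmaSubtype p), Nat.card_sigma]

lemma Nat.card_subtype_le_sum {X ι : Type*} [Finite X] [Fintype ι] {p : X → Prop}
    (S : ι → X → Prop) (h : ∀ x, p x → ∃ i, S i x) :
    Nat.card {x // p x} ≤ ∑ i, Nat.card {x // S i x} := by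
  choose f hf using fun x : {x // p x} => h x.1 x.2
  rw [← Nat.card_sigma]
  exact Nat.card_le_card_of_injective (fun x => ⟨f x, x.1, hf x⟩)
    fun x y hxy => Subtype.ext (congrArg (fun s : (i : ι) × {x // S i x} => s.2.1) hxy)

section VectorCounting

variable {δ : Type*} [Fintype δ]

@[simp] lemma Nat.card_vector (n : ℕ) : Nat.card (List.Vector δ n) = Fintype.card δ ^ n := by
  rw [Nat.card_eq_fintype_card, _root_.card_vector]

lemma card_vector_le_mul {M₁ M₂ : ℕ} (R P : List δ → Prop)
    (Q : List δ → List δ → Prop) {N : ℕ}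
    (hR : ∀ (u : List.Vector δ M₁) (v : List.Vector δ M₂),
      R (u.toList ++ v.toList) → P u.toList ∧ Q u.toList v.toList)
    (hQ : ∀ u, Nat.card {v : List.Vector δ M₂ // Q u v.toList} ≤ N) :
    Nat.card {c : List.Vector δ (M₁ + M₂) // R c.toList} ≤
      Nat.card {u : List.Vector δ M₁ // P u.toList} * N := by
  classical
  let split (c : List.Vector δ (M₁ + M₂)) : List.Vector δ M₁ × List.Vector δ M₂ :=
    (⟨c.toList.take M₁, by simp⟩, ⟨c.toList.drop M₁, by simp⟩)
  have hsplit (c) : (split c).1.toList ++ (split c).2.toList = c.toList :=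
    List.take_append_drop _ _
  let f (c : {c : List.Vector δ (M₁ + M₂) // R c.toList}) :
      (u : {u : List.Vector δ M₁ // P u.toList}) ×
        {v : List.Vector δ M₂ // Q u.1.toList v.toList} :=
    ⟨⟨(split c).1, (hR _ _ (by rw [hsplit]; exact c.2)).1⟩,
      ⟨(split c).2, (hR _ _ (by rw [hsplit]; exact c.2)).2⟩⟩
  have hf : Function.Injective f := fun c c' h => Subtype.ext <| List.Vector.toList_injective <| by
    rw [← hsplit c, ← hsplit c']
    exact congrArg (fun s => s.1.1.toList ++ s.2.1.toList) h
  calc Nat.card {c : List.Vector δ (M₁ + M₂) // R c.toList}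
      ≤ Nat.card ((u : {u : List.Vector δ M₁ // P u.toList}) ×
          {v : List.Vector δ M₂ // Q u.1.toList v.toList}) := Nat.card_le_card_of_injective f hf
    _ = ∑ u : {u : List.Vector δ M₁ // P u.toList},
          Nat.card {v : List.Vector δ M₂ // Q u.1.toList v.toList} := Nat.card_sigma
    _ ≤ ∑ _u : {u : List.Vector δ M₁ // P u.toList}, N := Finset.sum_le_sum fun u _ => hQ _
    _ = Nat.card {u : List.Vector δ M₁ // P u.toList} * N := by simp

lemma card_forall_blocks_le {s N : ℕ} : ∀ (B M : ℕ) (good : List δ → List δ → Prop),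
    (∀ x, Nat.card {b : List.Vector δ s // good x b.toList} ≤ N) →
    Nat.card {c : List.Vector δ (B * s + M) //
      ∀ j < B, good (c.toList.take (j * s)) ((c.toList.drop (j * s)).take s)} ≤
      N ^ B * Fintype.card δ ^ M
  | 0, M, good, _ => by simp
  | B + 1, M, good, hgood => by
    rw [show (B + 1) * s + M = s + (B * s + M) by ring]
    refine (card_vector_le_mul
      (fun c => ∀ j < B + 1, good (c.take (j * s)) ((c.drop (j * s)).take s)) (good [])
      (fun u v => ∀ j < B, good (u ++ v.take (j * s)) ((v.drop (j * s)).take s))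
      (N := N ^ B * Fintype.card δ ^ M) ?_
      fun u => card_forall_blocks_le B M _ fun x => hgood _).trans ?_
    · intro u v h
      have hu : u.toList.length = s := u.2
      refine ⟨by simpa [hu] using h 0 B.succ_pos, fun j hj => ?_⟩
      have := h (j + 1) (by omega)
      rwa [show (j + 1) * s = u.toList.length + j * s by rw [hu]; ring, take_length_add_append,
        drop_length_add_append] at this
    · calc _ ≤ N * (N ^ B * Fintype.card δ ^ M) := Nat.mul_le_mul_right _ (hgood [])
        _ = N ^ (B + 1) * Fintype.card δ ^ M := by ring

lemma card_forall_blocks_offset_le {s N n : ℕ} (p B M : ℕ) (good : List δ → List δ → Prop)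
    (hgood : ∀ x, Nat.card {b : List.Vector δ s // good x b.toList} ≤ N)
    (hn : p + (B * s + M) = n) :
    Nat.card {c : List.Vector δ n //
      ∀ j < B, good (c.toList.take (p + j * s)) ((c.toList.drop (p + j * s)).take s)} ≤
      Fintype.card δ ^ p * (N ^ B * Fintype.card δ ^ M) := by
  subst hn
  refine (card_vector_le_mul
    (fun c => ∀ j < B, good (c.take (p + j * s)) ((c.drop (p + j * s)).take s)) (fun _ => True)
    (fun u v => ∀ j < B, good (u ++ v.take (j * s)) ((v.drop (j * s)).take s)) ?_
    fun u => card_forall_blocks_le B M _ fun x => hgood _).trans ?_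
  · intro u v h
    have hu : u.toList.length = p := u.2
    refine ⟨trivial, fun j hj => ?_⟩
    have := h j hj
    rwa [show p + j * s = u.toList.length + j * s by rw [hu], take_length_add_append,
      drop_length_add_append] at this
  · rw [Nat.card_congr (Equiv.subtypeUnivEquiv fun _ => trivial), Nat.card_vector]

end VectorCounting

lemma subword_iff_isInfix {α : Type} {u w : List (α × Bool)} : Subword u w ↔ u <:+: w :=
  ⟨fun ⟨s, t, h⟩ => ⟨s, t, h.symm⟩, fun ⟨s, t, h⟩ => ⟨s, t, h.symm⟩⟩

lemma take_drop_isInfix_take_drop {β : Type*} (l : List β) {P L₀ i s : ℕ} (hP : P ≤ i)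
    (hi : i + s ≤ P + L₀) : (l.drop i).take s <:+: (l.drop P).take L₀ := by
  obtain ⟨t, rfl⟩ := Nat.exists_eq_add_of_le hP
  have : (l.drop (P + t)).take s = (((l.drop P).take L₀).drop t).take s := by
    rw [drop_take, take_take, drop_drop, min_eq_left (by omega)]
  rw [this]
  exact (take_prefix _ _).isInfix.trans (drop_suffix _ _).isInfix

lemma pow_le_inv_mul_rpow_pow {θ : ℝ} (hθ0 : 0 < θ) (hθ1 : θ ≤ 1) (lam : ℝ) {s : ℕ} (hs : 0 < s)
    (n : ℕ) : θ ^ ((⌈lam * n⌉₊ - 1) / s) ≤ θ⁻¹ * (θ ^ (lam / s)) ^ n := by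
  set B := (⌈lam * n⌉₊ - 1) / s
  have hB : ⌈lam * n⌉₊ ≤ (B + 1) * s := by
    have := (Nat.div_lt_iff_lt_mul hs).mp B.lt_add_one
    omega
  have hexp : lam * n / s ≤ ((B + 1 : ℕ) : ℝ) := by
    rw [div_le_iff₀ (by exact_mod_cast hs)]
    exact (Nat.le_ceil _).trans (by exact_mod_cast hB)
  calc θ ^ B = θ⁻¹ * θ ^ (B + 1) := by rw [pow_succ]; field_simp
    _ ≤ θ⁻¹ * θ ^ (lam * n / s) := by
      rw [← Real.rpow_natCast θ (B + 1)]
      exact mul_le_mul_of_nonneg_left (Real.rpow_le_rpow_of_exponent_ge hθ0 hθ1 hexp)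
        (inv_nonneg.mpr hθ0.le)
    _ = θ⁻¹ * (θ ^ (lam / s)) ^ n := by
      rw [← Real.rpow_mul_natCast hθ0.le, div_mul_eq_mul_div, mul_comm lam]

lemma one_sub_one_div_pow_mem_Ioo {D s : ℕ} (hD : 2 ≤ D) (hs : s ≠ 0) :
    1 - 1 / (D : ℝ) ^ s ∈ Set.Ioo 0 1 := by
  have : (1 : ℝ) < (D : ℝ) ^ s := one_lt_pow₀ (by exact_mod_cast hD) hs
  exact ⟨sub_pos.mpr ((div_lt_one (by linarith)).mpr this), sub_lt_self _ (by positivity)⟩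

lemma cast_pow_sub_one_pow_mul_pow {D s B M : ℕ} (hD : 0 < D) (hBM : B * s ≤ M) :
    (((D ^ s - 1) ^ B * D ^ (M - B * s) : ℕ) : ℝ) = (1 - 1 / (D : ℝ) ^ s) ^ B * D ^ M := by
  have hDs : (0 : ℝ) < (D : ℝ) ^ s := by positivity
  rw [Nat.cast_mul, Nat.cast_pow, Nat.cast_sub (Nat.one_le_pow _ _ hD), Nat.cast_pow,
    Nat.cast_pow, Nat.cast_one, show M = B * s + (M - B * s) by omega, Nat.add_sub_cancel_left,
    pow_add, pow_mul']
  rw [one_sub_div hDs.ne', div_pow]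
  field_simp

lemma abs_div_sub_one_le_one {G N : ℕ} (h : G ≤ N) : |(G : ℝ) / N - 1| ≤ 1 := by
  rcases N.eq_zero_or_pos with rfl | hN
  · simp
  have hN' : (0 : ℝ) < N := by exact_mod_cast hN
  have : (G : ℝ) / N ≤ 1 := (div_le_one hN').mpr (by exact_mod_cast h)
  rw [abs_le]
  constructor <;> nlinarith [div_nonneg (Nat.cast_nonneg G) hN'.le]

lemma abs_div_pow_sub_one_le {G B N : ℕ} (h : G + B = N) (hN : 0 < N) (m : ℕ) :
    |((G : ℝ) / N) ^ m - 1| ≤ m * ((B : ℝ) / N) := by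
  have hN' : (0 : ℝ) < N := by exact_mod_cast hN
  have hsum : (G : ℝ) / N + B / N = 1 := by
    rw [← add_div, div_eq_one_iff_eq hN'.ne']; exact_mod_cast h
  have hx0 : 0 ≤ (G : ℝ) / N := by positivity
  have hy0 : 0 ≤ (B : ℝ) / N := by positivity
  rw [abs_of_nonpos (by linarith [pow_le_one₀ (n := m) hx0 (by linarith)])]
  have := one_add_mul_le_pow (a := -((B : ℝ) / N)) (by linarith) m
  rw [show 1 + -((B : ℝ) / N) = G / N by linarith] at this
  linarith

lemma ncard_setOf_forall_mem {X : Type*} (m : ℕ) (S : Set X) :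
    {T : Fin m → X | ∀ i, T i ∈ S}.ncard = S.ncard ^ m := by
  rw [← Nat.card_coe_set_eq, ← Nat.card_coe_set_eq, Set.coe_ofPred,
    Nat.card_congr Equiv.subtypePiEquivPi, Nat.card_pi]
  simp

lemma finite_setOf_wlen_eq {α : Type} [Finite α] [DecidableEq α] (n : ℕ) :
    {g : FreeGroup α | wlen g = n}.Finite :=
  (List.finite_length_eq _ n).preimage FreeGroup.toWord_injective.injOn

lemma gammaA_setOf_forall {k m : ℕ} (Q : FreeGroup (Fin k) → Prop) (n : ℕ) :
    gammaA {T | T ∈ Cset k m ∧ ∀ i, Q (T i)} n =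
      {g | wlen g = n ∧ CyclicallyReduced g ∧ Q g}.ncard ^ m := by
  rw [gammaA, ← ncard_setOf_forall_mem]
  congr 1
  ext T
  simp only [Cset, Set.mem_ofPred_eq]
  exact ⟨fun ⟨⟨⟨hcyc, _⟩, hQ⟩, hn⟩ i => ⟨hn i, hcyc i, hQ i⟩,
    fun h => ⟨⟨⟨fun i => (h i).2.1, fun i j => (h i).1.trans (h j).1.symm⟩, fun i => (h i).2.2⟩,
      fun i => (h i).1⟩⟩

lemma gammaA_Cset (k m n : ℕ) :
    gammaA (Cset k m) n = {g : FreeGroup (Fin k) | wlen g = n ∧ CyclicallyReduced g}.ncard ^ m := by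
  simpa using gammaA_setOf_forall (m := m) (fun _ => True) n

lemma expGenericIn_of_eventually_le {k m : ℕ} (Q : FreeGroup (Fin k) → Prop) {C q : ℝ}
    (hq0 : 0 < q) (hq1 : q < 1)
    (h : ∀ᶠ n in atTop, 0 < {g : FreeGroup (Fin k) | wlen g = n ∧ CyclicallyReduced g}.ncard ∧
      ({g | wlen g = n ∧ CyclicallyReduced g ∧ ¬ Q g}.ncard : ℝ) ≤
        C * q ^ n * {g : FreeGroup (Fin k) | wlen g = n ∧ CyclicallyReduced g}.ncard) :
    ExpGenericIn {T | T ∈ Cset k m ∧ ∀ i, Q (T i)} := by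
  obtain ⟨N, hN⟩ := eventually_atTop.mp h
  refine ⟨fun T hT => hT.1, max (m * C) 0 + (q ^ N)⁻¹, by positivity, q, hq0, hq1, fun n => ?_⟩
  set S := {g : FreeGroup (Fin k) | wlen g = n ∧ CyclicallyReduced g}
  have hsplit : {g | wlen g = n ∧ CyclicallyReduced g ∧ Q g}.ncard +
      {g | wlen g = n ∧ CyclicallyReduced g ∧ ¬ Q g}.ncard = S.ncard := by
    convert Set.ncard_inter_add_ncard_sdiff_eq_ncard S {g | Q g}
      ((finite_setOf_wlen_eq n).subset fun g hg => hg.1) using 3 <;>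
    · ext g; simp [S, and_assoc]
  rw [gammaA_setOf_forall, gammaA_Cset]
  push_cast
  rw [← div_pow]
  have hq : 0 ≤ (q ^ N)⁻¹ * q ^ n := by positivity
  rcases lt_or_ge n N with hn | hn
  · calc _ ≤ (1 : ℝ) := by
          simpa [div_pow] using abs_div_sub_one_le_one (Nat.pow_le_pow_left
            (show {g | wlen g = n ∧ CyclicallyReduced g ∧ Q g}.ncard ≤ S.ncard by omega) m)
      _ ≤ (q ^ N)⁻¹ * q ^ n := by
          rw [inv_mul_eq_div, le_div_iff₀ (by positivity), one_mul]
          exact pow_le_pow_of_le_one hq0.le hq1.le hn.le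
      _ ≤ _ := by nlinarith [le_max_right (m * C) 0, pow_pos hq0 n]
  · obtain ⟨hS, hbad⟩ := hN n hn
    calc _ ≤ m * (({g | wlen g = n ∧ CyclicallyReduced g ∧ ¬ Q g}.ncard : ℝ) / S.ncard) :=
          abs_div_pow_sub_one_le hsplit hS m
      _ ≤ m * C * q ^ n := by
          rw [mul_assoc]
          gcongr
          rwa [div_le_iff₀ (by exact_mod_cast hS)]
      _ ≤ _ := by nlinarith [le_max_left (m * C) 0, pow_pos hq0 n]

namespace ReducedWord

open FreeGroup

lemma follows_iff_ne {α : Type*} (a b : α × Bool) : (a.1 = b.1 → a.2 = b.2) ↔ b ≠ (a.1, !a.2) := by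
  obtain ⟨a₁, a₂⟩ := a
  obtain ⟨b₁, b₂⟩ := b
  cases a₂ <;> cases b₂ <;> simp [eq_comm]

lemma follows_iff_ne' {α : Type*} (a b : α × Bool) : (a.1 = b.1 → a.2 = b.2) ↔ a ≠ (b.1, !b.2) := by
  obtain ⟨a₁, a₂⟩ := a
  obtain ⟨b₁, b₂⟩ := b
  cases a₂ <;> cases b₂ <;> simp

variable {α : Type} [Fintype α] [DecidableEq α]

abbrev Digit (α : Type) [Fintype α] : Type := Fin (2 * Fintype.card α - 1)

lemma card_successors (a : α × Bool) :
    Fintype.card {b : α × Bool // a.1 = b.1 → a.2 = b.2} = 2 * Fintype.card α - 1 := by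
  rw [Fintype.card_congr (Equiv.subtypeEquivRight (follows_iff_ne a)),
    Fintype.card_subtype_compl, Fintype.card_subtype_eq]
  simp [mul_comm]

noncomputable def successorEquiv (a : α × Bool) :
    Digit α ≃ {b : α × Bool // a.1 = b.1 → a.2 = b.2} :=
  (Fintype.equivFinOfCardEq (card_successors a)).symm

noncomputable def nextLetter (a : α × Bool) (j : Digit α) : α × Bool := successorEquiv a j

lemma nextLetter_follows (a : α × Bool) (j : Digit α) :
    a.1 = (nextLetter a j).1 → a.2 = (nextLetter a j).2 :=
  (successorEquiv a j).2

lemma nextLetter_injective (a : α × Bool) : Function.Injective (nextLetter a) :=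
  Subtype.val_injective.comp (successorEquiv a).injective

lemma exists_nextLetter_eq {a b : α × Bool} (h : a.1 = b.1 → a.2 = b.2) :
    ∃ j, nextLetter a j = b :=
  ⟨(successorEquiv a).symm ⟨b, h⟩, by simp [nextLetter]⟩

noncomputable def ofCode (a : α × Bool) (c : List (Digit α)) : List (α × Bool) :=
  c.scanl nextLetter a

@[simp] lemma ofCode_cons (a : α × Bool) (j : Digit α) (c : List (Digit α)) :
    ofCode a (j :: c) = a :: ofCode (nextLetter a j) c :=
  scanl_cons

@[simp] lemma length_ofCode (a : α × Bool) (c : List (Digit α)) :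
    (ofCode a c).length = c.length + 1 :=
  length_scanl

@[simp] lemma head?_ofCode (a : α × Bool) (c : List (Digit α)) : (ofCode a c).head? = some a :=
  head?_scanl

lemma ofCode_append (a : α × Bool) (c₁ c₂ : List (Digit α)) :
    ofCode a (c₁ ++ c₂) = ofCode a c₁ ++ (ofCode (c₁.foldl nextLetter a) c₂).tail :=
  scanl_append

lemma isReduced_ofCode (a : α × Bool) (c : List (Digit α)) : IsReduced (ofCode a c) := by
  induction c generalizing a with
  | nil => exact IsReduced.singleton
  | cons j c ih =>
    rw [ofCode_cons]
    exact (ih _).cons (by simpa using nextLetter_follows a j)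

lemma ofCode_injective {a a' : α × Bool} {c c' : List (Digit α)}
    (h : ofCode a c = ofCode a' c') : a = a' ∧ c = c' := by
  induction c generalizing a a' c' with
  | nil =>
    cases c' with
    | nil => simpa [ofCode] using h
    | cons j' c' => simpa using congrArg List.length h
  | cons j c ih =>
    cases c' with
    | nil => simpa using congrArg List.length h
    | cons j' c' =>
      obtain ⟨rfl, h⟩ := List.cons_eq_cons.mp (by simpa using h)
      obtain ⟨hj, rfl⟩ := ih h
      exact ⟨rfl, by rw [nextLetter_injective a hj]⟩

lemma exists_ofCode_eq {a : α × Bool} {L : List (α × Bool)} (h : IsReduced (a :: L)) :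
    ∃ c, ofCode a c = a :: L := by
  induction L generalizing a with
  | nil => exact ⟨[], rfl⟩
  | cons b L ih =>
    obtain ⟨hab, hL⟩ := isReduced_cons_cons.mp h
    obtain ⟨j, rfl⟩ := exists_nextLetter_eq hab
    obtain ⟨c, hc⟩ := ih hL
    exact ⟨j :: c, by rw [ofCode_cons, hc]⟩

noncomputable def codeEquiv (M : ℕ) :
    (α × Bool) × List.Vector (Digit α) M ≃ {g : FreeGroup α // wlen g = M + 1} :=
  Equiv.ofBijective
    (fun z => ⟨mk (ofCode z.1 z.2.toList), by
      simp [wlen, toWord_mk, (isReduced_ofCode _ _).reduce_eq]⟩)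
    ⟨fun z z' h => by
      obtain ⟨h₁, h₂⟩ := ofCode_injective (by
        simpa [toWord_mk, (isReduced_ofCode _ _).reduce_eq] using congrArg (toWord ∘ Subtype.val) h)
      exact Prod.ext h₁ (List.Vector.toList_injective h₂),
    fun ⟨g, hg⟩ => by
      obtain ⟨a, L, hL⟩ : ∃ a L, g.toWord = a :: L :=
        List.exists_cons_of_ne_nil (List.ne_nil_of_length_eq_add_one hg)
      obtain ⟨c, hc⟩ := exists_ofCode_eq (hL ▸ isReduced_toWord)
      have hlen : c.length = M := by
        have := congrArg List.length hc
        simp only [length_ofCode] at this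
        simp only [wlen, hL] at hg
        simpa [hg] using this
      exact ⟨(a, ⟨c, hlen⟩), Subtype.ext (by simp [hc, ← hL, mk_toWord])⟩⟩

lemma toWord_codeEquiv {M : ℕ} (z : (α × Bool) × List.Vector (Digit α) M) :
    (codeEquiv M z : FreeGroup α).toWord = ofCode z.1 z.2.toList :=
  toWord_mk.trans (isReduced_ofCode _ _).reduce_eq

lemma card_wlen_eq_succ (M : ℕ) (P : FreeGroup α → Prop) :
    Nat.card {g : FreeGroup α // wlen g = M + 1 ∧ P g} =
      Nat.card {z : (α × Bool) × List.Vector (Digit α) M // P (codeEquiv M z)} :=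
  Nat.card_congr ((Equiv.subtypeEquiv (codeEquiv M) fun _ => Iff.rfl).trans
    (Equiv.subtypeSubtypeEquivSubtypeInter _ P)).symm

lemma cyclicallyReduced_codeEquiv_iff {M : ℕ} (z : (α × Bool) × List.Vector (Digit α) M) :
    CyclicallyReduced (codeEquiv M z : FreeGroup α) ↔
      z.2.toList.foldl nextLetter z.1 ≠ (z.1.1, !z.1.2) := by
  rw [CyclicallyReduced, toWord_codeEquiv, ← follows_iff_ne, follows_iff_ne']
  simp [ofCode, head?_scanl, getLast?_scanl]

lemma ncard_wlen_eq_succ_le (M : ℕ) (Q : FreeGroup α → Prop) (P : List (α × Bool) → Prop) :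
    {g : FreeGroup α | wlen g = M + 1 ∧ Q g ∧ P g.toWord}.ncard ≤
      Nat.card {z : (α × Bool) × List.Vector (Digit α) M // P (ofCode z.1 z.2.toList)} := by
  rw [← Nat.card_coe_set_eq, Set.coe_ofPred, card_wlen_eq_succ M fun g => Q g ∧ P g.toWord]
  exact Nat.card_le_card_of_injective _ (Subtype.impEmbedding _ _ fun z hz => by
    rw [← toWord_codeEquiv]; exact hz.2).injective

lemma card_foldl_nextLetter_eq_le (a y : α × Bool) (M : ℕ) :
    Nat.card {c : List.Vector (Digit α) (M + 1) // c.toList.foldl nextLetter a = y} ≤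
      Fintype.card (Digit α) ^ M := by
  refine (card_vector_le_mul (fun c => c.foldl nextLetter a = y) (fun _ => True)
    (fun u v => v.foldl nextLetter (u.foldl nextLetter a) = y) (N := 1)
    (fun u v h => ⟨trivial, by simpa using h⟩) fun u => ?_).trans ?_
  · -- the last digit is determined by the last letter, `nextLetter` being injective
    refine Finite.card_le_one_iff_subsingleton.mpr
      ⟨fun v w => Subtype.ext (List.Vector.toList_injective ?_)⟩
    have hv := v.2
    have hw := w.2
    simp only [List.Vector.toList_singleton, foldl_cons, foldl_nil] at hv hw
    rw [List.Vector.toList_singleton, List.Vector.toList_singleton,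
      nextLetter_injective _ (hv.trans hw.symm)]
  · rw [Nat.card_congr (Equiv.subtypeUnivEquiv fun _ => trivial), Nat.card_vector, mul_one]

lemma ncard_cyclicallyReduced_ge (hk : 2 ≤ Fintype.card α) (M : ℕ) :
    Fintype.card α * Fintype.card (Digit α) ^ (M + 1) ≤
      {g : FreeGroup α | wlen g = M + 2 ∧ CyclicallyReduced g}.ncard := by
  have hD : 2 ≤ Fintype.card (Digit α) := by rw [Fintype.card_fin]; omega
  have hfiber (a : α × Bool) : Fintype.card (Digit α) ^ (M + 1) ≤
      2 * Nat.card {c : List.Vector (Digit α) (M + 1) //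
        c.toList.foldl nextLetter a ≠ (a.1, !a.2)} := by
    have hcompl := Fintype.card_subtype_compl
      (fun c : List.Vector (Digit α) (M + 1) => c.toList.foldl nextLetter a = (a.1, !a.2))
    have hbad := card_foldl_nextLetter_eq_le a (a.1, !a.2) M
    simp only [Nat.card_eq_fintype_card] at hbad ⊢
    rw [hcompl, card_vector]
    have : 2 * Fintype.card (Digit α) ^ M ≤ Fintype.card (Digit α) ^ (M + 1) := by
      rw [pow_succ']; exact Nat.mul_le_mul_right _ hD
    omega
  rw [← Nat.card_coe_set_eq, Set.coe_ofPred, card_wlen_eq_succ,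
    Nat.card_congr (Equiv.subtypeEquivRight cyclicallyReduced_codeEquiv_iff),
    Nat.card_prod_subtype (fun a (c : List.Vector (Digit α) (M + 1)) =>
      c.toList.foldl nextLetter a ≠ (a.1, !a.2))]
  have := Finset.card_nsmul_le_sum Finset.univ _ _ fun a _ => hfiber a
  simp only [Finset.card_univ, Fintype.card_prod, Fintype.card_bool, smul_eq_mul,
    ← Finset.mul_sum] at this
  nlinarith

def LongSubwordsContainAll (K : ℕ) (lam : ℝ) (L : List (α × Bool)) : Prop :=
  ∀ s : List (α × Bool), Subword s L → lam * (L.length : ℝ) ≤ (s.length : ℝ) →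
    ∀ w : FreeGroup α, w.toWord.length ≤ K → Subword w.toWord s

lemma exists_isReduced_extension {w : List (α × Bool)} (hw : IsReduced w) (hne : w ≠ [])
    {K : ℕ} (hK : w.length ≤ K) : ∃ W, IsReduced W ∧ W.length = K ∧ w <+: W := by
  obtain ⟨a, L, rfl⟩ := List.exists_cons_of_ne_nil hne
  obtain ⟨c, hc⟩ := exists_ofCode_eq hw
  have hD : 0 < 2 * Fintype.card α - 1 := by
    have := Fintype.card_pos_iff.mpr ⟨a.1⟩
    omega
  refine ⟨ofCode a (c ++ List.replicate (K - (L.length + 1)) ⟨0, hD⟩), isReduced_ofCode _ _,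
    ?_, ?_⟩
  · have := congrArg List.length hc
    simp only [length_ofCode, length_cons] at this
    simp only [length_ofCode, length_append, length_replicate]
    simp only [length_cons] at hK
    omega
  · rw [ofCode_append, hc]
    exact prefix_append _ _

lemma exists_not_isInfix_window {K : ℕ} {lam : ℝ} {L : List (α × Bool)}
    (h : ¬ LongSubwordsContainAll K lam L) :
    ∃ P, P + ⌈lam * L.length⌉₊ ≤ L.length ∧ ∃ W, IsReduced W ∧ W.length = K ∧
      ¬ W <:+: (L.drop P).take ⌈lam * L.length⌉₊ := by
  simp only [LongSubwordsContainAll, not_forall] at h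
  obtain ⟨s, ⟨u, v, hL⟩, hs, w, hwK, hmiss⟩ := h
  have hne : w.toWord ≠ [] := fun h => hmiss ⟨[], s, by simp [h]⟩
  obtain ⟨W, hW, hWK, hwW⟩ := exists_isReduced_extension isReduced_toWord hne hwK
  set L₀ := ⌈lam * (L.length : ℝ)⌉₊
  have hL₀ : L₀ ≤ s.length := Nat.ceil_le.mpr hs
  have hlen : L.length = u.length + s.length + v.length := by simp [hL, Nat.add_assoc]
  refine ⟨u.length, by omega, W, hW, hWK, fun hWin => hmiss ?_⟩
  rw [hL, append_assoc, drop_left, take_append_of_le_length hL₀] at hWin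
  exact subword_iff_isInfix.mpr (hwW.isInfix.trans (hWin.trans (take_prefix _ _).isInfix))

lemma tail_ofCode_take_drop (a : α × Bool) {c : List (Digit α)} {q s : ℕ}
    (h : q + s ≤ c.length) :
    (ofCode ((c.take q).foldl nextLetter a) ((c.drop q).take s)).tail =
      ((ofCode a c).drop (q + 1)).take s := by
  have h₁ : (ofCode a (c.take q)).length = q + 1 := by
    simp only [length_ofCode, length_take]; omega
  have h₂ : (ofCode ((c.take q).foldl nextLetter a) ((c.drop q).take s)).tail.length = s := by
    simp only [length_tail, length_ofCode, length_take, length_drop]; omega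
  conv_rhs => rw [← take_append_drop q c, ofCode_append, drop_left' h₁,
    ← take_append_drop s (c.drop q), ofCode_append,
    tail_append_of_ne_nil (ne_nil_of_length_eq_add_one (length_ofCode _ _)), take_left' h₂]

lemma not_isInfix_block_of_not_isInfix_window {W : List (α × Bool)} {a : α × Bool}
    {c : List (Digit α)} {P L₀ s j : ℕ} (hwin : P + L₀ ≤ c.length + 1) (hj : (j + 1) * s < L₀)
    (h : ¬ W <:+: ((ofCode a c).drop P).take L₀) :
    ¬ W <:+: (ofCode ((c.take (P + j * s)).foldl nextLetter a)
      ((c.drop (P + j * s)).take s)).tail := by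
  have hjs : (j + 1) * s = j * s + s := by ring
  rw [tail_ofCode_take_drop a (by omega)]
  exact fun hW => h (hW.trans (take_drop_isInfix_take_drop _ (by omega) (by omega)))

lemma exists_isReduced_cons_cons (hk : 2 ≤ Fintype.card α) (a : α × Bool)
    {W : List (α × Bool)} (hW : IsReduced W) : ∃ y, IsReduced (a :: y :: W) := by
  obtain ⟨y, -, hy⟩ := Finset.exists_mem_notMem_of_card_lt_card
    (s := {(a.1, !a.2), ((W.headD a).1, !(W.headD a).2)}) (t := Finset.univ)
    (Finset.card_le_two.trans_lt (by
      simp only [Finset.card_univ, Fintype.card_prod, Fintype.card_bool]; omega))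
  simp only [Finset.mem_insert, Finset.mem_singleton, not_or] at hy
  refine ⟨y, isReduced_cons_cons.mpr ⟨(follows_iff_ne a y).mpr hy.1, ?_⟩⟩
  cases W with
  | nil => exact IsReduced.singleton
  | cons b W => exact isReduced_cons_cons.mpr ⟨(follows_iff_ne' y b).mpr hy.2, hW⟩

lemma card_not_isInfix_tail_ofCode_le (hk : 2 ≤ Fintype.card α) (a : α × Bool)
    {W : List (α × Bool)} (hW : IsReduced W) :
    Nat.card {b : List.Vector (Digit α) (W.length + 1) // ¬ W <:+: (ofCode a b.toList).tail} ≤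
      Fintype.card (Digit α) ^ (W.length + 1) - 1 := by
  obtain ⟨y, hy⟩ := exists_isReduced_cons_cons hk a hW
  obtain ⟨c, hc⟩ := exists_ofCode_eq hy
  have hlen : c.length = W.length + 1 := by simpa using congrArg List.length hc
  have := Finite.card_subtype_lt
    (p := fun b : List.Vector (Digit α) (W.length + 1) => ¬ W <:+: (ofCode a b.toList).tail)
    (x := ⟨c, hlen⟩) (by simpa [hc] using (suffix_cons y W).isInfix)
  rw [Nat.card_vector] at this
  omega

lemma card_forall_blocks_not_isInfix_le (hk : 2 ≤ Fintype.card α) {W : List (α × Bool)}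
    (hW : IsReduced W) {M P B s : ℕ} (hs : W.length + 1 = s) (hPB : P + B * s ≤ M) :
    Nat.card {z : (α × Bool) × List.Vector (Digit α) M // ∀ j < B, ¬ W <:+:
      (ofCode ((z.2.toList.take (P + j * s)).foldl nextLetter z.1)
        ((z.2.toList.drop (P + j * s)).take s)).tail} ≤
      2 * Fintype.card α *
        ((Fintype.card (Digit α) ^ s - 1) ^ B * Fintype.card (Digit α) ^ (M - B * s)) := by
  subst hs
  rw [Nat.card_prod_subtype (fun a (c : List.Vector (Digit α) M) => ∀ j < B, ¬ W <:+:
    (ofCode ((c.toList.take (P + j * (W.length + 1))).foldl nextLetter a)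
      ((c.toList.drop (P + j * (W.length + 1))).take (W.length + 1))).tail)]
  refine (Finset.sum_le_card_nsmul _ _ ((Fintype.card (Digit α) ^ (W.length + 1) - 1) ^ B *
    Fintype.card (Digit α) ^ (M - B * (W.length + 1))) fun a _ => ?_).trans_eq
    (by rw [Finset.card_univ, smul_eq_mul, Fintype.card_prod, Fintype.card_bool]; ring)
  calc _ ≤ Fintype.card (Digit α) ^ P * ((Fintype.card (Digit α) ^ (W.length + 1) - 1) ^ B *
          Fintype.card (Digit α) ^ (M - B * (W.length + 1) - P)) :=
        card_forall_blocks_offset_le P B _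
          (fun x b => ¬ W <:+: (ofCode (x.foldl nextLetter a) b).tail)
          (fun x => card_not_isInfix_tail_ofCode_le hk (x.foldl nextLetter a) hW) (by omega)
    _ = _ := by
      rw [mul_left_comm, ← pow_add]
      congr 2
      omega

lemma card_not_longSubwordsContainAll_le (hk : 2 ≤ Fintype.card α) (K : ℕ) (lam : ℝ) {M B : ℕ}
    (hB : B * (K + 1) < ⌈lam * (M + 1 : ℕ)⌉₊) :
    Nat.card {z : (α × Bool) × List.Vector (Digit α) M //
      ¬ LongSubwordsContainAll K lam (ofCode z.1 z.2.toList)} ≤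
      (2 * Fintype.card α) ^ K * (M + 1) * (2 * Fintype.card α *
        ((Fintype.card (Digit α) ^ (K + 1) - 1) ^ B *
          Fintype.card (Digit α) ^ (M - B * (K + 1)))) := by
  let Covers (i : List.Vector (α × Bool) K × Fin (M + 1))
      (z : (α × Bool) × List.Vector (Digit α) M) : Prop :=
    IsReduced i.1.toList ∧ (i.2 : ℕ) + B * (K + 1) ≤ M ∧ ∀ j < B, ¬ i.1.toList <:+:
      (ofCode ((z.2.toList.take (i.2 + j * (K + 1))).foldl nextLetter z.1)
        ((z.2.toList.drop (i.2 + j * (K + 1))).take (K + 1))).tail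
  have hcover (z) (hz : ¬ LongSubwordsContainAll K lam (ofCode z.1 z.2.toList)) :
      ∃ i, Covers i z := by
    obtain ⟨P, hP, W, hW, hWK, hmiss⟩ := exists_not_isInfix_window hz
    have hlen : (ofCode z.1 z.2.toList).length = M + 1 := by simp
    rw [hlen] at hP hmiss
    have hPB : P + B * (K + 1) ≤ M := by omega
    refine ⟨(⟨W, hWK⟩, ⟨P, by omega⟩), hW, hPB, fun j hj =>
      not_isInfix_block_of_not_isInfix_window (by rwa [List.Vector.toList_length]) ?_ hmiss⟩
    exact (Nat.mul_le_mul_right _ hj).trans_lt hB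
  have hbound (i) : Nat.card {z // Covers i z} ≤ 2 * Fintype.card α *
      ((Fintype.card (Digit α) ^ (K + 1) - 1) ^ B *
        Fintype.card (Digit α) ^ (M - B * (K + 1))) := by
    by_cases h : IsReduced i.1.toList ∧ (i.2 : ℕ) + B * (K + 1) ≤ M
    · rw [Nat.card_congr (Equiv.subtypeEquivRight fun z =>
        ⟨fun hz => hz.2.2, fun hz => ⟨h.1, h.2, hz⟩⟩)]
      exact card_forall_blocks_not_isInfix_le hk h.1 (by simp) h.2
    · have : IsEmpty {z // Covers i z} := ⟨fun z => h ⟨z.2.1, z.2.2.1⟩⟩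
      simp
  refine (Nat.card_subtype_le_sum Covers hcover).trans
    ((Finset.sum_le_card_nsmul _ _ _ fun i _ => hbound i).trans (le_of_eq ?_))
  simp only [Finset.card_univ, smul_eq_mul, Fintype.card_prod, card_vector,
    Fintype.card_bool, Fintype.card_fin]
  ring

lemma ncard_not_longSubwordsContainAll_le (hk : 2 ≤ Fintype.card α) (K : ℕ) {lam : ℝ}
    (hlam0 : 0 < lam) (hlam1 : lam < 1) (M : ℕ) :
    ({g : FreeGroup α | wlen g = M + 2 ∧ CyclicallyReduced g ∧
        ¬ LongSubwordsContainAll K lam g.toWord}.ncard : ℝ) ≤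
      2 * (2 * Fintype.card α) ^ K * (1 - 1 / (Fintype.card (Digit α) : ℝ) ^ (K + 1))⁻¹ *
        ((M + 2 : ℕ) * ((1 - 1 / (Fintype.card (Digit α) : ℝ) ^ (K + 1)) ^
          (lam / (K + 1 : ℕ))) ^ (M + 2)) *
        {g : FreeGroup α | wlen g = M + 2 ∧ CyclicallyReduced g}.ncard := by
  set D := Fintype.card (Digit α)
  set θ : ℝ := 1 - 1 / (D : ℝ) ^ (K + 1)
  set κ := Fintype.card α
  set L₀ := ⌈lam * ((M + 2 : ℕ) : ℝ)⌉₊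
  set B := (L₀ - 1) / (K + 1)
  have hD : 2 ≤ D := by simp only [D, Fintype.card_fin]; omega
  obtain ⟨hθ0, hθ1⟩ := one_sub_one_div_pow_mem_Ioo hD K.succ_ne_zero
  have hL₀ : 0 < L₀ := Nat.ceil_pos.mpr (by positivity)
  have hL₀' : L₀ ≤ M + 2 := Nat.ceil_le.mpr (mul_le_of_le_one_left (by positivity) hlam1.le)
  have hB : B * (K + 1) < L₀ := (Nat.div_mul_le_self _ _).trans_lt (by omega)
  have hbad := (ncard_wlen_eq_succ_le (M + 1) CyclicallyReduced
    (¬ LongSubwordsContainAll K lam ·)).trans (card_not_longSubwordsContainAll_le hk K lam hB)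
  have hθB := pow_le_inv_mul_rpow_pow hθ0 hθ1.le lam (by omega : 0 < K + 1) (M + 2)
  have hcast := cast_pow_sub_one_pow_mul_pow (D := D) (s := K + 1) (B := B) (M := M + 1)
    (by omega) (by omega)
  calc _ ≤ (((2 * κ) ^ K * (M + 1 + 1) * (2 * κ * ((D ^ (K + 1) - 1) ^ B *
          D ^ (M + 1 - B * (K + 1)))) : ℕ) : ℝ) := by exact_mod_cast hbad
    _ = (2 * κ : ℝ) ^ K * (M + 2 : ℕ) * (2 * κ * (θ ^ B * D ^ (M + 1))) := by
      rw [← hcast]; push_cast; ring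
    _ ≤ (2 * κ : ℝ) ^ K * (M + 2 : ℕ) * (2 * κ * ((θ⁻¹ * (θ ^ (lam / (K + 1 : ℕ))) ^ (M + 2)) *
          D ^ (M + 1))) := by gcongr
    _ = 2 * (2 * κ : ℝ) ^ K * θ⁻¹ * ((M + 2 : ℕ) * (θ ^ (lam / (K + 1 : ℕ))) ^ (M + 2)) *
          ((κ * D ^ (M + 1) : ℕ) : ℝ) := by push_cast; ring
    _ ≤ _ := by gcongr; exact_mod_cast ncard_cyclicallyReduced_ge hk M

lemma eventually_ncard_not_longSubwordsContainAll_le (hk : 2 ≤ Fintype.card α) (K : ℕ)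
    {lam : ℝ} (hlam0 : 0 < lam) (hlam1 : lam < 1) :
    ∃ C q : ℝ, 0 < q ∧ q < 1 ∧ ∀ᶠ n in atTop,
      0 < {g : FreeGroup α | wlen g = n ∧ CyclicallyReduced g}.ncard ∧
      ({g : FreeGroup α | wlen g = n ∧ CyclicallyReduced g ∧
          ¬ LongSubwordsContainAll K lam g.toWord}.ncard : ℝ) ≤
        C * q ^ n * {g : FreeGroup α | wlen g = n ∧ CyclicallyReduced g}.ncard := by
  set θ : ℝ := 1 - 1 / (Fintype.card (Digit α) : ℝ) ^ (K + 1)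
  obtain ⟨hθ0, hθ1⟩ := one_sub_one_div_pow_mem_Ioo (D := Fintype.card (Digit α))
    (by rw [Fintype.card_fin]; omega) K.succ_ne_zero
  set r := θ ^ (lam / (K + 1 : ℕ))
  have hr0 : 0 < r := Real.rpow_pos_of_pos hθ0 _
  have hq0 : 0 < √r := Real.sqrt_pos.mpr hr0
  have hq1 : √r < 1 := (Real.sqrt_lt' one_pos).mpr (by
    rw [one_pow]; exact Real.rpow_lt_one hθ0.le hθ1 (by positivity))
  set q := √r
  refine ⟨2 * (2 * Fintype.card α) ^ K * θ⁻¹, q, hq0, hq1, ?_⟩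
  filter_upwards [(tendsto_self_mul_const_pow_of_lt_one hq0.le hq1).eventually_lt_const one_pos,
    eventually_ge_atTop 2] with n hn h2
  obtain ⟨M, rfl⟩ := Nat.exists_eq_add_of_le' h2
  have hD₀ : 0 < Fintype.card (Digit α) := by rw [Fintype.card_fin]; omega
  refine ⟨(Nat.mul_pos (by omega : 0 < Fintype.card α) (pow_pos hD₀ (M + 1))).trans_le
    (ncard_cyclicallyReduced_ge hk M), ?_⟩
  refine (ncard_not_longSubwordsContainAll_le hk K hlam0 hlam1 M).trans ?_
  -- taking `q = √r` absorbs the factor `n`: `n r^n = (n q^n) q^n ≤ q^n`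
  have : ((M + 2 : ℕ) : ℝ) * r ^ (M + 2) ≤ q ^ (M + 2) := by
    rw [← Real.mul_self_sqrt hr0.le, mul_pow, ← mul_assoc]
    exact mul_le_of_le_one_left (by positivity) hn.le
  gcongr

end ReducedWord

open ReducedWord in
theorem statement12_general (k m K : ℕ) (hk : 2 ≤ k)
    (lam : ℝ) (hlam0 : 0 < lam) (hlam1 : lam < 1) :
    ExpGenericIn {T : Fin m → FreeGroup (Fin k) | T ∈ Cset k m ∧
      ∀ i, ∀ s : List (Fin k × Bool), Subword s (T i).toWord →
        lam * ((T i).toWord.length : ℝ) ≤ (s.length : ℝ) →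
        ∀ w : FreeGroup (Fin k), w.toWord.length ≤ K → Subword w.toWord s} := by
  obtain ⟨C, q, hq0, hq1, h⟩ := eventually_ncard_not_longSubwordsContainAll_le (α := Fin k)
    (by rwa [Fintype.card_fin]) K hlam0 hlam1
  exact expGenericIn_of_eventually_le (fun g => LongSubwordsContainAll K lam g.toWord) hq0 hq1 h

theorem statement12 (k m K : ℕ) (hk : 2 ≤ k) (hm : 1 ≤ m) (hK : 1 ≤ K)
    (lam : ℝ) (hlam0 : 0 < lam) (hlam1 : lam < 1) :
    ExpGenericIn {T : Fin m → FreeGroup (Fin k) | T ∈ Cset k m ∧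
      ∀ i, ∀ s : List (Fin k × Bool), Subword s (T i).toWord →
        lam * ((T i).toWord.length : ℝ) ≤ (s.length : ℝ) →
        ∀ w : FreeGroup (Fin k), w.toWord.length ≤ K → Subword w.toWord s} :=
  statement12_general k m K hk lam hlam0 hlam1
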